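/- With notation as in the context, the following identity holds in the quotient ring A_6 = R/I: x_1 x_5 x_9 − a_4 a_5 x_1 − a_8 a_9 x_5 − a_{12} a_1 x_9 − a_1 a_5 a_9 − a_4 a_8 a_{12} = x_3 x_7 x_{11} − a_6 a_7 x_3 − a_{10} a_{11} x_7 − a_2 a_3 x_{11} − a_3 a_7 a_{11} − a_2 a_6 a_{10}. In other words, the cubic expression u_1 defined by x_1 x_5 x_9 = u_1 + a_4 a_5 x_1 + a_8 a_9 x_5 + a_{12} a_1 x_9 + a_1 a_5 a_9 + a_4 a_8 a_{12} is invariant under the index shift i ↦ i + 2 modulo the defining relations. -/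

import Mathlib

open MvPolynomial

namespace CayleyPlane

/-- The polynomial ring `R = ℂ[a₁,…,a₁₂, x₁,…,x₁₂, z₁, z₂, z₃]` in 27 variables,
with `a`- and `x`-subscripts read mod 12 and `z`-subscripts read mod 3. -/
abbrev R6 : Type := MvPolynomial (ZMod 12 ⊕ ZMod 12 ⊕ ZMod 3) ℂ

/-- The frozen variable `aᵢ` (subscript mod 12). -/
noncomputable def a (i : ℤ) : R6 := X (Sum.inl (i : ZMod 12))

/-- The spinor coordinate `xᵢ` (subscript mod 12). -/
noncomputable def x (i : ℤ) : R6 := X (Sum.inr (Sum.inl (i : ZMod 12)))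

/-- The spinor coordinate `zₖ` (subscript mod 3). -/
noncomputable def z (k : ℤ) : R6 := X (Sum.inr (Sum.inr (k : ZMod 3)))

/-- The quadric `(aᵢ)`: `xᵢx_{i+5} − a_{i+5}x_{i+2} − aᵢz_{i+1} − a_{i+7}x_{i+3} − a_{i+2}a_{i+10}`. -/
noncomputable def quadA (i : ℤ) : R6 :=
  x i * x (i+5) - a (i+5) * x (i+2) - a i * z (i+1) - a (i+7) * x (i+3) - a (i+2) * a (i+10)

/-- The quadric `(bᵢ)`: `xᵢx_{i+4} − x_{i+2}z_{i+2} + a_{i+2}x_{i+1} + a_{i+9}x_{i+3} − aᵢa_{i+11}`. -/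
noncomputable def quadB (i : ℤ) : R6 :=
  x i * x (i+4) - x (i+2) * z (i+2) + a (i+2) * x (i+1) + a (i+9) * x (i+3) - a i * a (i+11)

/-- The quadric `(cₖ)`: `zₖz_{k+1} − x_{k+2}x_{k+8} − x_{k+5}x_{k+11} − a_{k+1}a_{k+7} − a_{k+4}a_{k+10}`. -/
noncomputable def quadC (k : ℤ) : R6 :=
  z k * z (k+1) - x (k+2) * x (k+8) - x (k+5) * x (k+11) - a (k+1) * a (k+7) - a (k+4) * a (k+10)

/-- The ideal `I ⊆ R` generated by the 27 quadrics defining the Cayley plane `𝕆ℙ² ⊂ ℙ²⁶`. -/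
noncomputable def I6 : Ideal R6 :=
  Ideal.span (Set.range quadA ∪ Set.range quadB ∪ Set.range quadC)

/-- The quadratic cluster variable `yᵢ := xᵢzᵢ − aᵢx_{i−1} − a_{i+7}x_{i+1}`. -/
noncomputable def y (i : ℤ) : R6 := x i * z i - a i * x (i-1) - a (i+7) * x (i+1)

end CayleyPlane

/-!
The cubic `u₁` belongs to the family `uᵢ` obtained by shifting all subscripts by `i - 1`, and
`uᵢ - u_{i+2}` is a combination of four quadrics `(aⱼ)` with `a`-coefficients and two quadrics
`(bⱼ)` with `x`-coefficients. In it the `z`-terms cancel in pairs because `z` has period 3, and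
everything else cancels once the subscripts of `a` and `x` are read mod 12.
-/

namespace CayleyPlane

lemma quadA_mem_I6 (i : ℤ) : quadA i ∈ I6 :=
  Ideal.subset_span (.inl (.inl ⟨i, rfl⟩))

lemma quadB_mem_I6 (i : ℤ) : quadB i ∈ I6 :=
  Ideal.subset_span (.inl (.inr ⟨i, rfl⟩))

lemma a_add_twelve (i : ℤ) : a (i + 12) = a i := by
  simp only [a, Int.cast_add, Int.cast_ofNat]
  reduce_mod_char

noncomputable def u (i : ℤ) : R6 :=
  x i * x (i+4) * x (i+8) - a (i+3) * a (i+4) * x i - a (i+7) * a (i+8) * x (i+4)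
    - a (i+11) * a i * x (i+8) - a i * a (i+4) * a (i+8) - a (i+3) * a (i+7) * a (i+11)

lemma u_sub_u_add_two (i : ℤ) :
    u i - u (i+2) =
      a (i+8) * quadA (i+2) - a (i+9) * quadA (i+3) - a (i+2) * quadA (i+8)
        + a (i+3) * quadA (i+9) + x (i+8) * quadB i - x (i+2) * quadB (i+6) := by
  simp only [u, quadA, quadB, a, x, z, Int.cast_add, Int.cast_ofNat]
  ring_nf
  reduce_mod_char
  ring

lemma u_sub_u_add_two_mem_I6 (i : ℤ) : u i - u (i+2) ∈ I6 := by
  rw [u_sub_u_add_two]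
  have hA (c : R6) (j : ℤ) : c * quadA j ∈ I6 := I6.mul_mem_left c (quadA_mem_I6 j)
  have hB (c : R6) (j : ℤ) : c * quadB j ∈ I6 := I6.mul_mem_left c (quadB_mem_I6 j)
  exact sub_mem (add_mem (add_mem (sub_mem (sub_mem (hA _ _) (hA _ _)) (hA _ _)) (hA _ _))
    (hB _ _)) (hB _ _)

end CayleyPlane

open CayleyPlane in
/-- In `A₆ = R/I`, the cubic expression `u₁` defined by
`x₁x₅x₉ = u₁ + a₄a₅x₁ + a₈a₉x₅ + a₁₂a₁x₉ + a₁a₅a₉ + a₄a₈a₁₂`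
is invariant under the index shift `i ↦ i + 2` modulo the defining relations. -/
theorem cayley_u1_shift_invariant :
    (x 1 * x 5 * x 9 - a 4 * a 5 * x 1 - a 8 * a 9 * x 5 - a 12 * a 1 * x 9
        - a 1 * a 5 * a 9 - a 4 * a 8 * a 12) -
      (x 3 * x 7 * x 11 - a 6 * a 7 * x 3 - a 10 * a 11 * x 7 - a 2 * a 3 * x 11
        - a 3 * a 7 * a 11 - a 2 * a 6 * a 10) ∈ I6 := by
  have h14 : a 14 = a 2 := a_add_twelve 2
  convert u_sub_u_add_two_mem_I6 1 using 2
  · norm_num [u]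
  · norm_num [u, h14]
    ring
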